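/- arXiv:2406.14340 — 4 statements merged into one kernel-verified Lean document; each statement's English description precedes it below -/
import Mathlib

section
/- Let d ∈ ℕ, 𝔠 ∈ (0,∞), let 𝔩(θ,ϑ) = (𝔠/2)‖θ − ϑ‖² for θ,ϑ ∈ ℝ^d, let γ ∈ (0, 2/𝔠), let (Ω,𝓕,ℙ) be a probability space, let X_{n,m} : Ω → ℝ^d, (n,m) ∈ ℤ², be i.i.d. random variables with sup_{n,m∈ℤ} ‖X_{n,m}(ω)‖ < ∞ for every ω ∈ Ω, let M, 𝔐 ∈ ℕ, let Θ : ℕ₀ × Ω → ℝ^d satisfy Θ_n = Θ_{n−1} − (γ/M) Σ_{m=1}^M (∇_θ 𝔩)(Θ_{n−1}, X_{n,m}) for all n ∈ ℕ, and assume that (X_{n,m})_{(n,m)∈ℤ²} and Θ₀ are independent. Let χ : Ω → ℝ^d satisfy χ = Σ_{n=0}^∞ (𝔠γ(1−𝔠γ)^n/M) Σ_{m=1}^M X_{−n,m}, and assume ℙ( ‖(1−𝔠γ)χ + (𝔠γ/M) Σ_{m=1}^M X_{1,m} − (1/𝔐) Σ_{m=1}^𝔐 X_{2,m}‖ > ‖χ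 − (1/𝔐) Σ_{m=1}^𝔐 X_{2,m}‖ ) > 0. Then for every N ∈ ℕ it holds that ℙ( ⋃_{n=N}^∞ { Σ_{m=1}^𝔐 𝔩(Θ_n, X_{n,−m}) > Σ_{m=1}^𝔐 𝔩(Θ_{n−1}, X_{n,−m}) } ) = 1. -/
/-!
Put `ρ = 1 - 𝔠γ`, so that `|ρ| < 1` and an SGD step reads `Θₙ₊₁ = ρ Θₙ + uₙ₊₁` with `uₜ` equal to
`𝔠γ` times the batch mean of step `t`. The test loss at step `n + 1` exceeds the one at step `n`
iff `Θₙ₊₁` is farther than `Θₙ` from the mean `Ȳₙ` of the test samples, i.e. iff the step gap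
`‖ρ Θₙ + uₙ₊₁ - Ȳₙ‖ - ‖Θₙ - Ȳₙ‖` is positive.

By hypothesis the step gap started at `χ` exceeds some `δ > 0` with positive probability, and then
so does the gap started at the partial sum `∑_{k<K} ρᵏ u₋ₖ` of `χ`, for all large `K`. Along the
trajectory, `∑_{k<K} ρᵏ uₙ₋ₖ` differs from `Θₙ` by `ρᴷ Θₙ₋ₖ`, which is uniformly small because
`Θ` is bounded. The truncated gap at time `n` only depends on the samples of steps
`n + 1 - K, …, n + 1` and on the test samples of step `n + 1`; on disjoint windows these events are
independent with one and the same positive probability, so by the second Borel–Cantelli lemma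
infinitely many of them occur almost surely, and at each of them the true step gap is positive.
-/

open MeasureTheory ProbabilityTheory Filter Topology Finset

section Recursion

variable {E : Type*} [NormedAddCommGroup E] [NormedSpace ℝ E]

def laggedSum (ρ : ℝ) (u : ℤ → E) (K : ℕ) (t : ℤ) : E :=
  ∑ k ∈ range K, ρ ^ k • u (t - k)

lemma laggedSum_succ (ρ : ℝ) (u : ℤ → E) (K : ℕ) (t : ℤ) :
    laggedSum ρ u (K + 1) t = u t + ρ • laggedSum ρ u K (t - 1) := by
  simp only [laggedSum, sum_range_succ', smul_sum, smul_smul, ← pow_succ']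
  rw [add_comm]
  congr 1
  · simp
  · refine sum_congr rfl fun k _ => ?_
    push_cast
    ring_nf

variable {ρ : ℝ} {θ : ℕ → E} {u : ℤ → E}

lemma sub_laggedSum_eq (hθ : ∀ n, θ (n + 1) = ρ • θ n + u (n + 1)) (K n : ℕ) :
    θ (n + K) - laggedSum ρ u K (n + K) = ρ ^ K • θ n := by
  induction K with
  | zero => simp [laggedSum]
  | succ K ih =>
    rw [← add_assoc, hθ, laggedSum_succ, pow_succ', mul_smul, ← ih]
    push_cast
    rw [← add_assoc, add_sub_cancel_right, smul_sub]
    abel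

lemma exists_norm_le_of_recursion (hρ : |ρ| < 1) (hθ : ∀ n, θ (n + 1) = ρ • θ n + u (n + 1))
    {C : ℝ} (hu : ∀ t, ‖u t‖ ≤ C) : ∃ B, ∀ n, ‖θ n‖ ≤ B := by
  refine ⟨max ‖θ 0‖ (C / (1 - |ρ|)), fun n => ?_⟩
  induction n with
  | zero => exact le_max_left _ _
  | succ n ih =>
    have hC : C ≤ (1 - |ρ|) * max ‖θ 0‖ (C / (1 - |ρ|)) := by
      rw [← div_le_iff₀' (by linarith)]
      exact le_max_right _ _
    calc ‖θ (n + 1)‖ ≤ |ρ| * ‖θ n‖ + C := by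
          grw [hθ, norm_add_le, norm_smul, Real.norm_eq_abs, hu]
      _ ≤ max ‖θ 0‖ (C / (1 - |ρ|)) := by
          grw [ih]
          linarith

lemma eventually_norm_sub_laggedSum_lt (hρ : |ρ| < 1)
    (hθ : ∀ n, θ (n + 1) = ρ • θ n + u (n + 1)) (hu : ∃ C, ∀ t, ‖u t‖ ≤ C)
    {ε : ℝ} (hε : 0 < ε) : ∀ᶠ K in atTop, ∀ n ≥ K, ‖θ n - laggedSum ρ u K n‖ < ε := by
  obtain ⟨C, hC⟩ := hu
  obtain ⟨B, hB⟩ := exists_norm_le_of_recursion hρ hθ hC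
  have hlim : Tendsto (fun K => |ρ| ^ K * B) atTop (𝓝 0) := by
    simpa using (tendsto_pow_atTop_nhds_zero_of_lt_one (abs_nonneg ρ) hρ).mul_const B
  filter_upwards [hlim.eventually_lt_const hε] with K hK n hn
  obtain ⟨m, rfl⟩ := Nat.exists_eq_add_of_le' hn
  calc ‖θ (m + K) - laggedSum ρ u K ↑(m + K)‖ = |ρ| ^ K * ‖θ m‖ := by
        rw [Nat.cast_add, sub_laggedSum_eq hθ, norm_smul, norm_pow, Real.norm_eq_abs]
    _ ≤ |ρ| ^ K * B := by gcongr; exact hB m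
    _ < ε := hK

def stepGap (ρ : ℝ) (θ s y : E) : ℝ := ‖ρ • θ + s - y‖ - ‖θ - y‖

lemma continuous_stepGap_left (ρ : ℝ) (s y : E) : Continuous fun θ => stepGap ρ θ s y := by
  unfold stepGap
  fun_prop

lemma stepGap_sub_le (hρ : |ρ| ≤ 1) (θ θ' s y : E) :
    stepGap ρ θ' s y - stepGap ρ θ s y ≤ 2 * ‖θ - θ'‖ := by
  have h₁ : ‖ρ • θ' + s - y‖ ≤ ‖ρ • θ + s - y‖ + ‖θ - θ'‖ :=
    calc ‖ρ • θ' + s - y‖ = ‖(ρ • θ + s - y) - ρ • (θ - θ')‖ := by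
          rw [smul_sub]; abel_nf
      _ ≤ ‖ρ • θ + s - y‖ + |ρ| * ‖θ - θ'‖ := by
          grw [norm_sub_le, norm_smul, Real.norm_eq_abs]
      _ ≤ ‖ρ • θ + s - y‖ + ‖θ - θ'‖ := by
          grw [hρ, one_mul]
  have h₂ : ‖θ - y‖ ≤ ‖θ' - y‖ + ‖θ - θ'‖ := by
    simpa [add_comm] using norm_sub_le_norm_sub_add_norm_sub θ θ' y
  unfold stepGap
  linarith

lemma frequently_norm_sub_lt_norm_succ_sub (hρ : |ρ| < 1)
    (hθ : ∀ n, θ (n + 1) = ρ • θ n + u (n + 1)) (hu : ∃ C, ∀ t, ‖u t‖ ≤ C)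
    {y : ℕ → E} {δ : ℝ} (hδ : 0 < δ)
    (h : ∃ᶠ K in atTop, ∃ᶠ n : ℕ in atTop, δ < stepGap ρ (laggedSum ρ u K n) (u (n + 1)) (y n)) :
    ∃ᶠ n in atTop, ‖θ n - y n‖ < ‖θ (n + 1) - y n‖ := by
  obtain ⟨K, hgap, hclose⟩ :=
    (h.and_eventually (eventually_norm_sub_laggedSum_lt hρ hθ hu (half_pos hδ))).exists
  refine (hgap.and_eventually (eventually_ge_atTop K)).mono fun n ⟨hn, hKn⟩ => ?_
  have := stepGap_sub_le hρ.le (θ n) (laggedSum ρ u K n) (u (n + 1)) (y n)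
  have := hclose n hKn
  have hstep : stepGap ρ (θ n) (u (n + 1)) (y n) = ‖θ (n + 1) - y n‖ - ‖θ n - y n‖ := by
    rw [stepGap, hθ]
  linarith

end Recursion

section Mean

variable {F ι : Type*} [NormedAddCommGroup F] [InnerProductSpace ℝ F]

lemma sum_norm_sub_sq_eq {s : Finset ι} (hs : s.Nonempty) (y : ι → F) (θ : F) :
    ∑ i ∈ s, ‖θ - y i‖ ^ 2 = #s * ‖θ - (#s : ℝ)⁻¹ • ∑ i ∈ s, y i‖ ^ 2
      + ∑ i ∈ s, ‖(#s : ℝ)⁻¹ • ∑ j ∈ s, y j - y i‖ ^ 2 := by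
  set ybar := (#s : ℝ)⁻¹ • ∑ i ∈ s, y i
  have hcentred : ∑ i ∈ s, (ybar - y i) = 0 := by
    rw [sum_sub_distrib, sum_const, ← Nat.cast_smul_eq_nsmul ℝ,
      smul_inv_smul₀ (by simp [hs.ne_empty]), sub_self]
  calc ∑ i ∈ s, ‖θ - y i‖ ^ 2 = ∑ i ∈ s, ‖(θ - ybar) + (ybar - y i)‖ ^ 2 := by
        simp only [sub_add_sub_cancel]
    _ = _ := by
        simp only [norm_add_sq_real, sum_add_distrib, ← mul_sum, ← inner_sum, hcentred,
          inner_zero_right, mul_zero, add_zero, sum_const, nsmul_eq_mul]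

lemma sum_norm_sub_sq_lt {s : Finset ι} (hs : s.Nonempty) (y : ι → F) {θ θ' : F}
    (h : ‖θ - (#s : ℝ)⁻¹ • ∑ i ∈ s, y i‖ < ‖θ' - (#s : ℝ)⁻¹ • ∑ i ∈ s, y i‖) :
    ∑ i ∈ s, ‖θ - y i‖ ^ 2 < ∑ i ∈ s, ‖θ' - y i‖ ^ 2 := by
  rw [sum_norm_sub_sq_eq hs y θ, sum_norm_sub_sq_eq hs y θ']
  have hcard : (0 : ℝ) < #s := by exact_mod_cast hs.card_pos
  gcongr ?_ + _
  exact mul_lt_mul_of_pos_left (pow_lt_pow_left₀ h (norm_nonneg _) two_ne_zero) hcard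

end Mean

lemma sgd_step_eq {E : Type*} [AddCommGroup E] [Module ℝ E] {M : ℕ} (hM : 0 < M) (c γ : ℝ)
    (θ : E) (x : ℕ → E) :
    θ - (γ / M) • ∑ m ∈ range M, c • (θ - x m)
      = (1 - c * γ) • θ + (c * γ) • ((M : ℝ)⁻¹ • ∑ m ∈ range M, x m) := by
  rw [← smul_sum, sum_sub_distrib, sum_const, card_range, ← Nat.cast_smul_eq_nsmul ℝ]
  have : (M : ℝ) ≠ 0 := by positivity
  match_scalars <;> field_simp

section Measure

variable {α : Type*} [MeasurableSpace α] {μ : Measure α}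

lemma exists_pos_measure_setOf_lt {f : α → ℝ} (h : 0 < μ {x | 0 < f x}) :
    ∃ δ > 0, 0 < μ {x | δ < f x} := by
  by_contra! hnull
  have hcover : {x | 0 < f x} ⊆ ⋃ n : ℕ, {x | 1 / ((n : ℝ) + 1) < f x} := fun x hx =>
    Set.mem_iUnion.2 (exists_nat_one_div_lt (show 0 < f x from hx))
  exact h.ne' (measure_mono_null hcover
    (measure_iUnion_null fun n => nonpos_iff_eq_zero.1 (hnull _ Nat.one_div_pos_of_nat)))

lemma eventually_pos_measure_setOf_lt {f : ℕ → α → ℝ} {g : α → ℝ}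
    (hfg : ∀ x, Tendsto (f · x) atTop (𝓝 (g x))) {a : ℝ} (h : 0 < μ {x | a < g x}) :
    ∀ᶠ K in atTop, 0 < μ {x | a < f K x} := by
  by_contra hnull
  simp only [not_eventually, not_lt, nonpos_iff_eq_zero] at hnull
  have hcover : {x | a < g x} ⊆ ⋃ K₀ : ℕ, ⋂ K ≥ K₀, {x | a < f K x} := fun x hx => by
    simpa using ((hfg x).eventually (lt_mem_nhds hx)).exists_forall_of_atTop
  refine h.ne' (measure_mono_null hcover (measure_iUnion_null fun K₀ => ?_))
  obtain ⟨K, hK, hK0⟩ := (frequently_atTop.1 hnull) K₀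
  exact measure_mono_null (Set.biInter_subset_of_mem hK) hK0

end Measure

section Independence

variable {Ω ι κ β : Type*} [MeasurableSpace Ω] {P : Measure Ω} [MeasurableSpace β]

lemma ProbabilityTheory.iIndepFun.curry {X : ι × κ → Ω → β} (hX : ∀ p, Measurable (X p))
    (h : iIndepFun X P) :
    iIndepFun (fun i ω j => X (i, j) ω) P := by
  have := h.isProbabilityMeasure
  rw [iIndepFun_iff_map_fun_eq_infinitePi_map (fun i => by fun_prop)]
  have hrow : ∀ i, P.map (fun ω j => X (i, j) ω) = Measure.infinitePi fun j => P.map (X (i, j)) :=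
    fun i => (h.precomp (Prod.mk_right_injective i)).map_fun_eq_infinitePi_map (fun j => hX _)
  calc P.map (fun ω i j => X (i, j) ω)
      = (P.map fun ω p => X p ω).map (MeasurableEquiv.curry ι κ β) := by
        rw [Measure.map_map (MeasurableEquiv.measurable _) (by fun_prop)]; rfl
    _ = Measure.infinitePi fun i => Measure.infinitePi fun j => P.map (X (i, j)) := by
        have (p : ι × κ) : IsProbabilityMeasure (P.map (X p)) :=
          Measure.isProbabilityMeasure_map (hX p).aemeasurable
        rw [h.map_fun_eq_infinitePi_map hX]
        exact Measure.infinitePi_map_curry fun i j => P.map (X (i, j))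
    _ = _ := by simp_rw [hrow]

variable {X : ι → Ω → β}

lemma map_eq_of_iIndepFun_identDistrib (hX : ∀ i, Measurable (X i)) (hind : iIndepFun X P)
    (hident : ∀ i j, IdentDistrib (X i) (X j) P P) {e e' : κ → ι} (he : e.Injective)
    (he' : e'.Injective) :
    P.map (fun ω k => X (e k) ω) = P.map (fun ω k => X (e' k) ω) := by
  rw [(hind.precomp he).map_fun_eq_infinitePi_map (fun k => hX _),
    (hind.precomp he').map_fun_eq_infinitePi_map (fun k => hX _)]
  congr 1
  funext k
  exact (hident (e k) (e' k)).map_eq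

/-- Second Borel–Cantelli lemma along disjoint windows of an i.i.d. family. -/
lemma ae_frequently_mem_of_iIndepFun_identDistrib (hX : ∀ i, Measurable (X i))
    (hind : iIndepFun X P) (hident : ∀ i j, IdentDistrib (X i) (X j) P P)
    {e : ℕ × κ → ι} (he : e.Injective) {e' : κ → ι} (he' : e'.Injective)
    {A : Set (κ → β)} (hA : MeasurableSet A) (hpos : 0 < P ((fun ω k => X (e' k) ω) ⁻¹' A)) :
    ∀ᵐ ω ∂P, ∃ᶠ n in atTop, (fun k => X (e (n, k)) ω) ∈ A := by
  have := hind.isProbabilityMeasure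
  set Z : ℕ → Ω → κ → β := fun n ω k => X (e (n, k)) ω
  have hZ : ∀ n, Measurable (Z n) := fun n => by fun_prop
  have hlaw : ∀ n, P (Z n ⁻¹' A) = P ((fun ω k => X (e' k) ω) ⁻¹' A) := fun n => by
    rw [← Measure.map_apply (hZ n) hA, ← Measure.map_apply (by fun_prop) hA,
      map_eq_of_iIndepFun_identDistrib hX hind hident (e := fun k => e (n, k))
        (he.comp (Prod.mk_right_injective n)) he']
  have hsets : iIndepSet (fun n => Z n ⁻¹' A) P :=
    (iIndepSet_iff_meas_biInter fun n => hZ n hA).2 fun s =>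
      ((hind.precomp he).curry fun _ => hX _).meas_biInter fun n _ => ⟨A, hA, rfl⟩
  have hlimsup := measure_limsup_eq_one (fun n => hZ n hA) hsets
    (by simp_rw [hlaw]; exact ENNReal.tsum_const_eq_top_of_ne_zero hpos.ne')
  rw [← measure_univ (μ := P), ← ae_mem_iff_measure_eq
    (MeasurableSet.measurableSet_limsup fun n => hZ n hA).nullMeasurableSet] at hlimsup
  exact hlimsup.mono fun ω hω => mem_limsup_iff_frequently_mem.1 hω

end Independence

noncomputable section Windows

variable {Ω E : Type*} [NormedAddCommGroup E] [NormedSpace ℝ E]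

def sampleMean (X : ℤ × ℤ → Ω → E) (N : ℕ) (pos : ℕ → ℤ × ℤ) (ω : Ω) : E :=
  (N : ℝ)⁻¹ • ∑ m ∈ range N, X (pos m) ω

def batchMean (X : ℤ × ℤ → Ω → E) (M : ℕ) (t : ℤ) : Ω → E :=
  sampleMean X M fun m => (t, m + 1)

lemma norm_sampleMean_le {X : ℤ × ℤ → Ω → E} {N : ℕ} (hN : 0 < N) (pos : ℕ → ℤ × ℤ) {ω : Ω}
    {C : ℝ} (hC : ∀ p, ‖X p ω‖ ≤ C) : ‖sampleMean X N pos ω‖ ≤ C := by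
  have hN' : (0 : ℝ) < N := by exact_mod_cast hN
  rw [sampleMean, norm_smul, norm_inv, Real.norm_natCast, inv_mul_le_iff₀ hN']
  calc ‖∑ m ∈ range N, X (pos m) ω‖ ≤ ∑ _m ∈ range N, C := norm_sum_le_of_le _ fun m _ => hC _
    _ = N * C := by rw [sum_const, card_range, nsmul_eq_mul]

def testIndex (t : ℤ) (m : ℕ) : ℤ × ℤ := (t + 1, -(m + 1))

/-- Index set of a window of samples: the batches of the `K + 1` steps `t + 1 - k`, `k ≤ K`, and
`N` test samples. `blockGap` reads the truncated step gap off a window, with `k = 0` the step batch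
and `k = j + 1` the lag `j` (`blockGap_blockIndex`). -/
abbrev Block (K M N : ℕ) : Type := (Fin (K + 1) × Fin M) ⊕ Fin N

def blockIndex {K M N : ℕ} (t : ℤ) (pos : ℕ → ℤ × ℤ) : Block K M N → ℤ × ℤ
  | .inl (k, m) => (t + 1 - k, m + 1)
  | .inr m => pos m

def blockGap {K M N : ℕ} (ρ b : ℝ) (v : Block K M N → E) : ℝ :=
  stepGap ρ (∑ k : Fin K, ρ ^ (k : ℕ) • b • (M : ℝ)⁻¹ • ∑ m, v (.inl (k.succ, m)))
    (b • (M : ℝ)⁻¹ • ∑ m, v (.inl (0, m))) ((N : ℝ)⁻¹ • ∑ m, v (.inr m))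

lemma continuous_blockGap (K M N : ℕ) (ρ b : ℝ) :
    Continuous (blockGap ρ b : (Block K M N → E) → ℝ) := by
  unfold blockGap stepGap
  fun_prop

lemma blockGap_blockIndex (X : ℤ × ℤ → Ω → E) (K M N : ℕ) (ρ b : ℝ) (t : ℤ)
    (pos : ℕ → ℤ × ℤ) (ω : Ω) :
    blockGap ρ b (fun i : Block K M N => X (blockIndex t pos i) ω)
      = stepGap ρ (laggedSum ρ (fun s => b • batchMean X M s ω) K t) (b • batchMean X M (t + 1) ω)
        (sampleMean X N pos ω) := by
  simp only [blockGap, blockIndex, laggedSum, batchMean, sampleMean, sum_range, Fin.val_succ,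
    Fin.val_zero]
  push_cast
  simp only [sub_zero, add_sub_add_right_eq_sub]

lemma blockIndex_stationary_injective (K M N : ℕ) :
    (blockIndex (K := K) (M := M) (N := N) 0 fun m => (2, m + 1)).Injective := by
  rintro (⟨k, m⟩ | m) (⟨k', m'⟩ | m') h <;>
    simp only [blockIndex, Prod.mk.injEq, Sum.inl.injEq, Sum.inr.injEq] at h ⊢ <;> omega

lemma blockIndex_windows_injective (K M N : ℕ) :
    (fun p : ℕ × Block K M N =>
      blockIndex ((p.1 * (K + 1) : ℕ) : ℤ) (testIndex ((p.1 * (K + 1) : ℕ) : ℤ)) p.2).Injective :=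
    by
  rintro ⟨j, ⟨k, m⟩ | m⟩ ⟨j', ⟨k', m'⟩ | m'⟩ h <;>
    simp only [blockIndex, testIndex, Prod.mk.injEq, Sum.inl.injEq, Sum.inr.injEq] at h ⊢
  · obtain ⟨h₁, h₂⟩ := h
    have hk := k.isLt
    have hk' := k'.isLt
    obtain rfl : j = j' := by
      rcases lt_trichotomy j j' with hj | hj | hj
      · have : j * (K + 1) + (K + 1) ≤ j' * (K + 1) := by nlinarith
        omega
      · exact hj
      · have : j' * (K + 1) + (K + 1) ≤ j * (K + 1) := by nlinarith
        omega
    omega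
  · omega
  · omega
  · obtain ⟨h₁, h₂⟩ := h
    have : j * (K + 1) = j' * (K + 1) := by omega
    exact ⟨Nat.eq_of_mul_eq_mul_right K.succ_pos this, by omega⟩

variable [MeasurableSpace Ω] {P : Measure Ω} [MeasurableSpace E] [BorelSpace E]
  [SecondCountableTopology E] {X : ℤ × ℤ → Ω → E}

lemma ae_frequently_lt_stepGap (hX : ∀ p, Measurable (X p)) (hind : iIndepFun X P)
    (hident : ∀ p q, IdentDistrib (X p) (X q) P P) {M N K : ℕ} {ρ b δ : ℝ}
    (hpos : 0 < P {ω | δ < stepGap ρ (laggedSum ρ (fun t => b • batchMean X M t ω) K 0)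
      (b • batchMean X M 1 ω) (sampleMean X N (fun m => (2, m + 1)) ω)}) :
    ∀ᵐ ω ∂P, ∃ᶠ n : ℕ in atTop, δ < stepGap ρ (laggedSum ρ (fun t => b • batchMean X M t ω) K n)
      (b • batchMean X M (n + 1) ω) (sampleMean X N (testIndex n) ω) := by
  have hA : MeasurableSet {v : Block K M N → E | δ < blockGap ρ b v} :=
    measurableSet_lt measurable_const (continuous_blockGap K M N ρ b).measurable
  have hwindows := ae_frequently_mem_of_iIndepFun_identDistrib hX hind hident
    (blockIndex_windows_injective K M N) (blockIndex_stationary_injective K M N) hA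
    (by simpa [Set.preimage, blockGap_blockIndex] using hpos)
  have hspread : Tendsto (fun j : ℕ => j * (K + 1)) atTop atTop :=
    tendsto_id.atTop_mul_const' K.succ_pos
  filter_upwards [hwindows] with ω hω
  exact hspread.frequently (hω.mono fun j hj => by simpa [blockGap_blockIndex] using hj)

lemma ae_eventually_frequently_lt_stepGap (hX : ∀ p, Measurable (X p)) (hind : iIndepFun X P)
    (hident : ∀ p q, IdentDistrib (X p) (X q) P P) {M N : ℕ} {ρ b δ : ℝ}
    (hpos : ∀ᶠ K in atTop, 0 < P {ω |
      δ < stepGap ρ (laggedSum ρ (fun t => b • batchMean X M t ω) K 0)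
        (b • batchMean X M 1 ω) (sampleMean X N (fun m => (2, m + 1)) ω)}) :
    ∀ᵐ ω ∂P, ∀ᶠ K in atTop, ∃ᶠ n : ℕ in atTop,
      δ < stepGap ρ (laggedSum ρ (fun t => b • batchMean X M t ω) K n)
        (b • batchMean X M (n + 1) ω) (sampleMean X N (testIndex n) ω) := by
  obtain ⟨K₀, hK₀⟩ := eventually_atTop.1 hpos
  filter_upwards [ae_all_iff.2 fun j => ae_frequently_lt_stepGap hX hind hident
    (hK₀ (K₀ + j) le_self_add)] with ω hω
  filter_upwards [eventually_ge_atTop K₀] with K hK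
  obtain ⟨j, rfl⟩ := Nat.exists_eq_add_of_le hK
  exact hω j

end Windows

theorem stmt_5_general {Ω : Type*} [MeasurableSpace Ω] (P : Measure Ω) [IsProbabilityMeasure P]
    (d : ℕ) (c : ℝ) (hc : 0 < c)
    (γ : ℝ) (hγ : γ ∈ Set.Ioo (0 : ℝ) (2 / c))
    (X : ℤ × ℤ → Ω → EuclideanSpace ℝ (Fin d))
    (hmeas : ∀ p, Measurable (X p))
    (hindep : iIndepFun X P)
    (hident : ∀ p q : ℤ × ℤ, IdentDistrib (X p) (X q) P P)
    (hbdd : ∀ ω, ∃ C : ℝ, ∀ p : ℤ × ℤ, ‖X p ω‖ ≤ C)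
    (M 𝔐 : ℕ) (hM : 0 < M) (h𝔐 : 0 < 𝔐)
    (Θ : ℕ → Ω → EuclideanSpace ℝ (Fin d))
    (hrec : ∀ (n : ℕ) ω, Θ (n + 1) ω = Θ n ω -
      (γ / (M : ℝ)) • ∑ m ∈ Finset.range M, c • (Θ n ω - X ((n : ℤ) + 1, (m : ℤ) + 1) ω))
    (χ : Ω → EuclideanSpace ℝ (Fin d))
    (hχ : ∀ ω, HasSum
      (fun n : ℕ => ((c * γ * (1 - c * γ) ^ n) / (M : ℝ)) •
        ∑ m ∈ Finset.range M, X (-(n : ℤ), (m : ℤ) + 1) ω)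
      (χ ω))
    (hpos : 0 < P {ω |
      ‖(1 - c * γ) • χ ω + ((c * γ) / (M : ℝ)) • (∑ m ∈ Finset.range M, X (1, (m : ℤ) + 1) ω)
          - ((1 : ℝ) / (𝔐 : ℝ)) • (∑ m ∈ Finset.range 𝔐, X (2, (m : ℤ) + 1) ω)‖
        > ‖χ ω - ((1 : ℝ) / (𝔐 : ℝ)) • (∑ m ∈ Finset.range 𝔐, X (2, (m : ℤ) + 1) ω)‖})
    (N : ℕ) :
    P {ω | ∃ n : ℕ, N ≤ n + 1 ∧
      (∑ m ∈ Finset.range 𝔐, (c / 2) * ‖Θ (n + 1) ω - X ((n : ℤ) + 1, -((m : ℤ) + 1)) ω‖ ^ 2)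
        > (∑ m ∈ Finset.range 𝔐, (c / 2) * ‖Θ n ω - X ((n : ℤ) + 1, -((m : ℤ) + 1)) ω‖ ^ 2)}
      = 1 := by
  obtain ⟨hγ0, hγ2⟩ := hγ
  have hρ : |1 - c * γ| < 1 :=
    abs_sub_lt_iff.2 ⟨by nlinarith, by linarith [(lt_div_iff₀' hc).1 hγ2]⟩
  set u : Ω → ℤ → EuclideanSpace ℝ (Fin d) := fun ω t => (c * γ) • batchMean X M t ω
  have hstep : ∀ ω n, Θ (n + 1) ω = (1 - c * γ) • Θ n ω + u ω (n + 1) := fun ω n => by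
    rw [hrec, sgd_step_eq hM]; rfl
  have hu : ∀ ω, ∃ C, ∀ t, ‖u ω t‖ ≤ C := fun ω => by
    obtain ⟨C, hC⟩ := hbdd ω
    exact ⟨‖c * γ‖ * C, fun t => by grw [norm_smul, batchMean, norm_sampleMean_le hM _ hC]⟩
  have hχ' : ∀ ω, Tendsto (fun K => laggedSum (1 - c * γ) (u ω) K 0) atTop (𝓝 (χ ω)) := by
    intro ω
    refine (hχ ω).tendsto_sum_nat.congr fun K => sum_congr rfl fun k _ => ?_
    simp only [u, batchMean, sampleMean, smul_smul, zero_sub]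
    congr 1
    field_simp
  have hpos' : 0 < P {ω | 0 < stepGap (1 - c * γ) (χ ω) (u ω 1)
      (sampleMean X 𝔐 (fun m => (2, m + 1)) ω)} := by
    simpa [stepGap, u, batchMean, sampleMean, smul_smul, div_eq_mul_inv] using hpos
  obtain ⟨δ, hδ, hδpos⟩ := exists_pos_measure_setOf_lt hpos'
  have hK := eventually_pos_measure_setOf_lt
    (fun ω => ((continuous_stepGap_left _ _ _).tendsto _).comp (hχ' ω)) hδpos
  refine (measure_congr (eventuallyEq_univ.2 ?_)).trans measure_univ
  filter_upwards [ae_eventually_frequently_lt_stepGap hmeas hindep hident hK] with ω hω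
  obtain ⟨n, hn, hlt⟩ := frequently_atTop.1
    (frequently_norm_sub_lt_norm_succ_sub (θ := (Θ · ω)) hρ (hstep ω) (hu ω) hδ hω.frequently) N
  refine ⟨n, by omega, ?_⟩
  rw [gt_iff_lt, ← mul_sum, ← mul_sum]
  refine mul_lt_mul_of_pos_left (sum_norm_sub_sq_lt (nonempty_range_iff.2 h𝔐.ne') _ ?_)
    (half_pos hc)
  simpa [sampleMean, testIndex] using hlt

/-- **SGD with constant learning rate: the test loss strictly increases infinitely often.**
Let `𝔩(θ,ϑ) = (𝔠/2)‖θ−ϑ‖²`, `γ ∈ (0, 2/𝔠)`, let `X_{n,m} : Ω → ℝ^d`, `(n,m) ∈ ℤ²`, be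
i.i.d. random variables with `sup_{n,m}‖X_{n,m}(ω)‖ < ∞` for every `ω`, let `Θ` satisfy the
SGD recursion `Θ_n = Θ_{n−1} − (γ/M) Σ_{m=1}^M (∇_θ 𝔩)(Θ_{n−1}, X_{n,m})` (with
`(∇_θ 𝔩)(θ,x) = 𝔠(θ−x)`), assume `(X_{n,m})` and `Θ₀` independent, let
`χ = Σ_{n=0}^∞ (𝔠γ(1−𝔠γ)^n/M) Σ_{m=1}^M X_{−n,m}` and assume that one SGD step from the
invariant distribution strictly increases the test loss with positive probability. Then for
every `N ∈ ℕ` it holds that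
`ℙ(⋃_{n=N}^∞ {Σ_{m=1}^𝔐 𝔩(Θ_n, X_{n,−m}) > Σ_{m=1}^𝔐 𝔩(Θ_{n−1}, X_{n,−m})}) = 1`. -/
theorem stmt_5 {Ω : Type*} [MeasurableSpace Ω] (P : Measure Ω) [IsProbabilityMeasure P]
    (d : ℕ) (hd : 0 < d) (c : ℝ) (hc : 0 < c)
    (γ : ℝ) (hγ : γ ∈ Set.Ioo (0 : ℝ) (2 / c))
    (X : ℤ × ℤ → Ω → EuclideanSpace ℝ (Fin d))
    (hmeas : ∀ p, Measurable (X p))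
    (hindep : iIndepFun X P)
    (hident : ∀ p q : ℤ × ℤ, IdentDistrib (X p) (X q) P P)
    (hbdd : ∀ ω, ∃ C : ℝ, ∀ p : ℤ × ℤ, ‖X p ω‖ ≤ C)
    (M 𝔐 : ℕ) (hM : 0 < M) (h𝔐 : 0 < 𝔐)
    (Θ : ℕ → Ω → EuclideanSpace ℝ (Fin d)) (hΘmeas : ∀ n, Measurable (Θ n))
    (hrec : ∀ (n : ℕ) ω, Θ (n + 1) ω = Θ n ω -
      (γ / (M : ℝ)) • ∑ m ∈ Finset.range M, c • (Θ n ω - X ((n : ℤ) + 1, (m : ℤ) + 1) ω))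
    (hindep0 : IndepFun (fun ω (p : ℤ × ℤ) => X p ω) (Θ 0) P)
    (χ : Ω → EuclideanSpace ℝ (Fin d))
    (hχ : ∀ ω, HasSum
      (fun n : ℕ => ((c * γ * (1 - c * γ) ^ n) / (M : ℝ)) •
        ∑ m ∈ Finset.range M, X (-(n : ℤ), (m : ℤ) + 1) ω)
      (χ ω))
    (hpos : 0 < P {ω |
      ‖(1 - c * γ) • χ ω + ((c * γ) / (M : ℝ)) • (∑ m ∈ Finset.range M, X (1, (m : ℤ) + 1) ω)
          - ((1 : ℝ) / (𝔐 : ℝ)) • (∑ m ∈ Finset.range 𝔐, X (2, (m : ℤ) + 1) ω)‖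
        > ‖χ ω - ((1 : ℝ) / (𝔐 : ℝ)) • (∑ m ∈ Finset.range 𝔐, X (2, (m : ℤ) + 1) ω)‖})
    (N : ℕ) (hN : 0 < N) :
    P {ω | ∃ n : ℕ, N ≤ n + 1 ∧
      (∑ m ∈ Finset.range 𝔐, (c / 2) * ‖Θ (n + 1) ω - X ((n : ℤ) + 1, -((m : ℤ) + 1)) ω‖ ^ 2)
        > (∑ m ∈ Finset.range 𝔐, (c / 2) * ‖Θ n ω - X ((n : ℤ) + 1, -((m : ℤ) + 1)) ω‖ ^ 2)}
      = 1 :=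
  stmt_5_general P d c hc γ hγ X hmeas hindep hident hbdd M 𝔐 hM h𝔐 Θ hrec χ hχ hpos N
end

section
/- Let d ∈ ℕ, η ∈ (0,1), let (Ω,𝓕,ℙ) be a probability space, let Y_k : Ω → ℝ^d, k ∈ ℕ₀, be non-degenerate i.i.d. random variables with E[‖Y₀‖] < ∞, let Z : Ω → ℝ^d be a non-degenerate random variable, assume that (Y_k)_{k∈ℕ₀} and Z are independent, let A = {Σ_{k=1}^∞ η(1−η)^{k−1} ‖Y_k‖ < ∞}, and let χ : Ω → ℝ^d be a random variable which satisfies χ(ω) = Σ_{k=1}^∞ η(1−η)^{k−1} Y_k(ω) for all ω ∈ A. Then ℙ( ‖(1−η)χ + ηY₀ − Z‖ > ‖χ − Z‖ ) > 0. -/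
/-!
Pick `a` in the interior of the common support of the `Y k` and `z` in the support of `Z`.
Some `y` near `a` satisfies `‖a - z‖ < ‖(1 - η) a + η y - z‖`, and by continuity this strict
inequality persists for `(χ, Y 0, Z)` within some `ε` of `(a, y, z)`. Since
`χ - a = ∑ η (1 - η)^k (Y (k + 1) - a)`, `χ` is `ε`-close to `a` once the first `N` summands
are and the weighted tail is small; the tail has expectation `O((1 - η)^N)`, so for large `N`
it is small with positive probability (Markov). By independence, the events on `Y 0`, on
`Y 1, …, Y N`, on the tail and on `Z` occur together with positive probability.
-/

open MeasureTheory ProbabilityTheory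

/-- The support of a random variable `X`, i.e. the support of its law `ℙ_X`: the set of
points `x` such that every open set containing `x` has positive `ℙ_X`-measure. -/
def rvSupport {Ω E : Type*} [MeasurableSpace Ω] [TopologicalSpace E]
    (P : Measure Ω) (X : Ω → E) : Set E :=
  {x | ∀ U : Set E, IsOpen U → x ∈ U → 0 < P (X ⁻¹' U)}

/-- A random variable is non-degenerate if the interior of its support is non-empty. -/
def NonDegenerate {Ω E : Type*} [MeasurableSpace Ω] [TopologicalSpace E]
    (P : Measure Ω) (X : Ω → E) : Prop :=
  (interior (rvSupport P X)).Nonempty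

open Set Filter Topology Metric
open scoped ENNReal

theorem hasSum_mul_one_sub_pow {η : ℝ} (h0 : 0 < η) (h1 : η < 1) :
    HasSum (fun k : ℕ => η * (1 - η) ^ k) 1 := by
  simpa [h0.ne'] using
    (hasSum_geometric_of_lt_one (by linarith) (by linarith : 1 - η < 1)).mul_left η

section Normed

variable {E : Type*} [NormedAddCommGroup E] [NormedSpace ℝ E]

theorem exists_norm_eq_one_norm_add_smul [Nontrivial E] (v : E) :
    ∃ u : E, ‖u‖ = 1 ∧ ∀ t : ℝ, 0 ≤ t → ‖v + t • u‖ = ‖v‖ + t := by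
  rcases eq_or_ne v 0 with rfl | hv
  · obtain ⟨u, hu⟩ := exists_norm_eq E zero_le_one
    exact ⟨u, hu, fun t ht => by rw [zero_add, norm_zero, zero_add, norm_smul, hu, mul_one,
      Real.norm_of_nonneg ht]⟩
  · have hv' : 0 < ‖v‖ := norm_pos_iff.2 hv
    refine ⟨‖v‖⁻¹ • v, by rw [norm_smul, norm_inv, norm_norm, inv_mul_cancel₀ hv'.ne'],
      fun t ht => ?_⟩
    have : v + t • ‖v‖⁻¹ • v = (1 + t * ‖v‖⁻¹) • v := by module
    rw [this, norm_smul, Real.norm_of_nonneg (by positivity)]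
    field_simp

theorem exists_mem_ball_norm_sub_lt [Nontrivial E] (a z : E) {η r : ℝ} (hη : 0 < η)
    (hr : 0 < r) : ∃ y ∈ ball a r, ‖a - z‖ < ‖(1 - η) • a + η • y - z‖ := by
  obtain ⟨u, hu, hadd⟩ := exists_norm_eq_one_norm_add_smul (a - z)
  refine ⟨a + (r / 2) • u, ?_, ?_⟩
  · rw [mem_ball, dist_eq_norm, add_sub_cancel_left, norm_smul, hu, mul_one,
      Real.norm_of_nonneg (by positivity)]
    linarith
  · have : (1 - η) • a + η • (a + (r / 2) • u) - z = (a - z) + (η * (r / 2)) • u := by module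
    rw [this, hadd _ (by positivity)]
    linarith [mul_pos hη (half_pos hr)]

theorem exists_pos_forall_dist_lt_norm_sub_lt (η : ℝ) {a y z : E}
    (h : ‖a - z‖ < ‖(1 - η) • a + η • y - z‖) :
    ∃ ε > 0, ∀ c y' z', dist c a < ε → dist y' y < ε → dist z' z < ε →
      ‖c - z'‖ < ‖(1 - η) • c + η • y' - z'‖ := by
  have hopen : IsOpen {p : E × E × E | ‖p.1 - p.2.2‖ < ‖(1 - η) • p.1 + η • p.2.1 - p.2.2‖} :=
    isOpen_lt (by fun_prop) (by fun_prop)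
  obtain ⟨ε, hε, hball⟩ := Metric.isOpen_iff.1 hopen (a, y, z) h
  refine ⟨ε, hε, fun c y' z' hc hy hz => hball (?_ : (c, y', z') ∈ ball (a, y, z) ε)⟩
  simp [Prod.dist_eq, hc, hy, hz]

theorem enorm_sub_le_tsum_of_hasSum {ι : Type*} {w : ι → ℝ} (hw : HasSum w 1) {x : ι → E}
    {c : E} (hc : HasSum (fun k => w k • x k) c) (a : E) :
    ‖c - a‖ₑ ≤ ∑' k, ‖w k • (x k - a)‖ₑ := by
  have hdev : HasSum (fun k => w k • (x k - a)) (c - a) := by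
    simpa only [smul_sub, one_smul] using hc.sub (hw.smul_const a)
  rw [← hdev.tsum_eq]
  exact enorm_tsum_le_tsum_enorm

theorem summable_mul_norm_of_tsum_enorm_ne_top {ι : Type*} {w : ι → ℝ} (hw0 : ∀ k, 0 ≤ w k)
    (hw : Summable w) {x : ι → E} {a : E} (h : ∑' k, ‖w k • (x k - a)‖ₑ ≠ ∞) :
    Summable fun k => w k * ‖x k‖ := by
  refine .of_nonneg_of_le (fun k => mul_nonneg (hw0 k) (norm_nonneg _)) (fun k => ?_)
    ((tsum_enorm_ne_top_iff_summable_norm.1 h).add (hw.mul_right ‖a‖))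
  rw [norm_smul, Real.norm_of_nonneg (hw0 k), ← mul_add]
  exact mul_le_mul_of_nonneg_left (norm_le_norm_sub_add _ _) (hw0 k)

theorem tsum_enorm_smul_sub_lt {w : ℕ → ℝ} (hw0 : ∀ k, 0 ≤ w k) (hw : HasSum w 1) {x : ℕ → E}
    {a : E} {δ : ℝ} {N : ℕ} (hhead : ∀ k < N, dist (x k) a < δ)
    (htail : ∑' k, ‖w (k + N) • (x (k + N) - a)‖ₑ < ENNReal.ofReal δ) :
    ∑' k, ‖w k • (x k - a)‖ₑ < ENNReal.ofReal (2 * δ) := by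
  have hδ : 0 ≤ δ := (ENNReal.ofReal_pos.1 (pos_of_gt htail)).le
  have hsum : ∑ k ∈ Finset.range N, ‖w k • (x k - a)‖ₑ ≤ ENNReal.ofReal δ := calc
    ∑ k ∈ Finset.range N, ‖w k • (x k - a)‖ₑ
        = ENNReal.ofReal (∑ k ∈ Finset.range N, w k * ‖x k - a‖) := by
      rw [ENNReal.ofReal_sum_of_nonneg fun k _ => mul_nonneg (hw0 k) (norm_nonneg _)]
      refine Finset.sum_congr rfl fun k _ => ?_
      rw [← ofReal_norm, norm_smul, Real.norm_of_nonneg (hw0 k)]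
    _ ≤ ENNReal.ofReal ((∑ k ∈ Finset.range N, w k) * δ) := by
      rw [Finset.sum_mul]
      refine ENNReal.ofReal_le_ofReal (Finset.sum_le_sum fun k hk => ?_)
      rw [← dist_eq_norm]
      exact mul_le_mul_of_nonneg_left (hhead k (Finset.mem_range.1 hk)).le (hw0 k)
    _ ≤ ENNReal.ofReal δ := ENNReal.ofReal_le_ofReal <|
      mul_le_of_le_one_left hδ (sum_le_hasSum _ (fun k _ => hw0 k) hw)
  rw [← ENNReal.summable.sum_add_tsum_nat_add', two_mul, ENNReal.ofReal_add hδ hδ]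
  exact ENNReal.add_lt_add_of_le_of_lt (hsum.trans_lt ENNReal.ofReal_lt_top).ne hsum htail

end Normed

theorem ProbabilityTheory.IdentDistrib.rvSupport_eq {Ω Ω' E : Type*} [MeasurableSpace Ω]
    [MeasurableSpace Ω'] [TopologicalSpace E] [MeasurableSpace E] [OpensMeasurableSpace E]
    {P : Measure Ω} {P' : Measure Ω'} {X : Ω → E} {X' : Ω' → E} (h : IdentDistrib X X' P P') :
    rvSupport P X = rvSupport P' X' := by
  ext x
  exact forall_congr' fun U => imp_congr_right fun hU => by
    rw [h.measure_mem_eq hU.measurableSet]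

theorem NonDegenerate.exists_ball_subset {Ω E : Type*} [MeasurableSpace Ω] [PseudoMetricSpace E]
    {P : Measure Ω} {X : Ω → E} (h : NonDegenerate P X) :
    ∃ a, ∃ r > 0, ball a r ⊆ rvSupport P X := by
  obtain ⟨a, ha⟩ := h
  obtain ⟨r, hr, hball⟩ := Metric.isOpen_iff.1 isOpen_interior a ha
  exact ⟨a, r, hr, hball.trans interior_subset⟩

theorem measure_lt_pos_of_lintegral_lt {α : Type*} [MeasurableSpace α] {μ : Measure α}
    [IsProbabilityMeasure μ] {f : α → ℝ≥0∞} {t : ℝ≥0∞} (h : ∫⁻ x, f x ∂μ < t) :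
    0 < μ {x | f x < t} := by
  by_contra! h0
  have hae : ∀ᵐ x ∂μ, t ≤ f x := by
    filter_upwards [measure_eq_zero_iff_ae_notMem.1 (nonpos_iff_eq_zero.1 h0)] with x hx
    simpa using hx
  have := (lintegral_mono_ae hae).trans_lt h
  simp at this

theorem MeasurableSpace.comap_pi_comp_le {Ω ι γ E : Type*} [mE : MeasurableSpace E]
    (f : ι → Ω → E) (k : γ → ι) :
    MeasurableSpace.comap (fun ω c => f (k c) ω) MeasurableSpace.pi
      ≤ ⨆ i ∈ range k, mE.comap (f i) := by
  let _ : MeasurableSpace Ω := ⨆ i ∈ range k, mE.comap (f i)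
  refine Measurable.comap_le (measurable_pi_iff.2 fun c => ?_)
  exact (comap_measurable (f (k c))).mono (le_iSup₂_of_le (k c) ⟨c, rfl⟩ le_rfl) le_rfl

namespace ProbabilityTheory

variable {Ω E : Type*} {mΩ : MeasurableSpace Ω} {μ : Measure Ω} [MeasurableSpace E]

theorem iIndepFun.indepFun_comp_of_disjoint_range {ι α β : Type*} {f : ι → Ω → E}
    (hf : iIndepFun f μ) (hmeas : ∀ i, Measurable (f i)) {g : α → ι} {h : β → ι}
    (hgh : Disjoint (range g) (range h)) :
    IndepFun (fun ω a => f (g a) ω) (fun ω b => f (h b) ω) μ := by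
  rw [IndepFun_iff_Indep]
  exact indep_of_indep_of_le
    (indep_iSup_of_disjoint (fun i => (hmeas i).comap_le) hf.iIndep hgh)
    (MeasurableSpace.comap_pi_comp_le f g) (MeasurableSpace.comap_pi_comp_le f h)

theorem iIndepFun.measure_head_inter_tail {Y : ℕ → Ω → E} (hY : iIndepFun Y μ)
    (hmeas : ∀ k, Measurable (Y k)) (n : ℕ) {B : Fin n → Set E}
    (hB : ∀ i, MeasurableSet (B i)) {T : Set (ℕ → E)} (hT : MeasurableSet T) :
    μ ({ω | ∀ i : Fin n, Y i ω ∈ B i} ∩ {ω | (fun k => Y (k + n) ω) ∈ T})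
      = (∏ i : Fin n, μ (Y i ⁻¹' B i)) * μ {ω | (fun k => Y (k + n) ω) ∈ T} := by
  have hdisj : Disjoint (range (Fin.val : Fin n → ℕ)) (range (· + n)) := by
    rw [Set.disjoint_left]
    rintro _ ⟨i, rfl⟩ ⟨k, hk⟩
    have := i.isLt
    dsimp only at hk
    omega
  have hsplit := (hY.indepFun_comp_of_disjoint_range hmeas hdisj).measure_inter_preimage_eq_mul
    _ _ (MeasurableSet.univ_pi hB) hT
  have hhead := (hY.precomp Fin.val_injective).meas_iInter (s := fun i : Fin n => Y i ⁻¹' B i)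
    fun i => ⟨B i, hB i, rfl⟩
  simp only [preimage, mem_univ_pi] at hsplit
  rw [hsplit, ← hhead]
  congr 2
  ext
  simp

theorem measurableSet_tsum_enorm_smul_sub_lt [NormedAddCommGroup E] [NormedSpace ℝ E]
    [OpensMeasurableSpace E] [SecondCountableTopology E] (c : ℕ → ℝ) (a : E) (t : ℝ≥0∞) :
    MeasurableSet {g : ℕ → E | ∑' k, ‖c k • (g k - a)‖ₑ < t} :=
  measurableSet_lt (Measurable.tsum fun k => by fun_prop) measurable_const

theorem lintegral_tsum_enorm_smul_sub [NormedAddCommGroup E] [NormedSpace ℝ E] [BorelSpace E]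
    {X : ℕ → Ω → E} {X₀ : Ω → E} (hX : ∀ k, IdentDistrib (X k) X₀ μ μ) (c : ℕ → ℝ) (a : E) :
    ∫⁻ ω, ∑' k, ‖c k • (X k ω - a)‖ₑ ∂μ = (∑' k, ‖c k‖ₑ) * ∫⁻ ω, ‖X₀ ω - a‖ₑ ∂μ := by
  have hmeas : Measurable fun x : E => ‖x - a‖ₑ := (measurable_id.sub_const a).enorm
  rw [lintegral_tsum (f := fun k ω => ‖c k • (X k ω - a)‖ₑ) fun k =>
      ((hX k).aemeasurable_fst.sub_const a).const_smul (c k) |>.enorm, ← ENNReal.tsum_mul_right]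
  refine tsum_congr fun k => ?_
  simp only [enorm_smul]
  rw [lintegral_const_mul' _ _ enorm_ne_top]
  exact congrArg _ ((hX k).comp hmeas).lintegral_eq

theorem exists_measure_tsum_enorm_smul_sub_lt_pos [NormedAddCommGroup E] [NormedSpace ℝ E]
    [BorelSpace E] [IsProbabilityMeasure μ] {X : ℕ → Ω → E} {X₀ : Ω → E}
    (hX : ∀ k, IdentDistrib (X k) X₀ μ μ) {a : E} (hX₀ : ∫⁻ ω, ‖X₀ ω - a‖ₑ ∂μ ≠ ∞)
    {w : ℕ → ℝ} (hw : Summable w) {t : ℝ≥0∞} (ht : 0 < t) :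
    ∃ N, 0 < μ {ω | ∑' k, ‖w (k + N) • (X (k + N) ω - a)‖ₑ < t} := by
  have hlim : Tendsto (fun N => (∑' k, ‖w (k + N)‖ₑ) * ∫⁻ ω, ‖X₀ ω - a‖ₑ ∂μ) atTop (𝓝 0) := by
    simpa using ENNReal.Tendsto.mul_const
      (ENNReal.tendsto_sum_nat_add _ (tsum_enorm_ne_top_iff_summable_norm.2 hw.norm)) (.inr hX₀)
  obtain ⟨N, hN⟩ := (hlim.eventually (gt_mem_nhds ht)).exists
  refine ⟨N, measure_lt_pos_of_lintegral_lt ?_⟩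
  rwa [lintegral_tsum_enorm_smul_sub fun k => hX (k + N)]

theorem iIndepFun.measure_head_inter_tail_inter_pos {F : Type*} [MeasurableSpace F]
    {Y : ℕ → Ω → E} (hY : iIndepFun Y μ) (hmeas : ∀ k, Measurable (Y k)) {Z : Ω → F}
    (hZ : IndepFun (fun ω k => Y k ω) Z μ) {n : ℕ} {B : Fin n → Set E}
    (hB : ∀ i, MeasurableSet (B i)) (hBpos : ∀ i : Fin n, 0 < μ (Y i ⁻¹' B i)) {T : Set (ℕ → E)}
    (hT : MeasurableSet T) (hTpos : 0 < μ {ω | (fun k => Y (k + n) ω) ∈ T}) {U : Set F}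
    (hU : MeasurableSet U) (hUpos : 0 < μ (Z ⁻¹' U)) :
    0 < μ ({ω | ∀ i : Fin n, Y i ω ∈ B i} ∩ {ω | (fun k => Y (k + n) ω) ∈ T} ∩ Z ⁻¹' U) := by
  have hhead : MeasurableSet {g : ℕ → E | ∀ i : Fin n, g i ∈ B i} := by
    convert MeasurableSet.iInter fun i : Fin n =>
      (measurable_pi_apply (i : ℕ) : Measurable fun g : ℕ → E => g i) (hB i) using 1
    ext
    simp
  have htail : MeasurableSet {g : ℕ → E | (fun k => g (k + n)) ∈ T} :=
    measurable_pi_lambda _ (fun k => measurable_pi_apply (k + n)) hT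
  have hsplit := hZ.measure_inter_preimage_eq_mul _ _ (hhead.inter htail) hU
  simp only [preimage_inter, preimage_ofPred_eq] at hsplit
  rw [hsplit, hY.measure_head_inter_tail hmeas n hB hT]
  exact ENNReal.mul_pos (ENNReal.mul_pos (CanonicallyOrderedAdd.prod_pos.2 fun i _ => hBpos i).ne'
    hTpos.ne').ne' hUpos.ne'

theorem iIndepFun.measure_initial_tail_pos {F : Type*} [MeasurableSpace F]
    {Y : ℕ → Ω → E} (hY : iIndepFun Y μ) (hmeas : ∀ k, Measurable (Y k)) {Z : Ω → F}
    (hZ : IndepFun (fun ω k => Y k ω) Z μ) {U V : Set E} (hU : MeasurableSet U)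
    (hUpos : 0 < μ (Y 0 ⁻¹' U)) (hV : MeasurableSet V) (hVpos : ∀ k, 0 < μ (Y (k + 1) ⁻¹' V))
    {N : ℕ} {T : Set (ℕ → E)} (hT : MeasurableSet T)
    (hTpos : 0 < μ {ω | (fun k => Y (k + N + 1) ω) ∈ T}) {W : Set F} (hW : MeasurableSet W)
    (hWpos : 0 < μ (Z ⁻¹' W)) :
    0 < μ {ω | Y 0 ω ∈ U ∧ (∀ k < N, Y (k + 1) ω ∈ V) ∧ (fun k => Y (k + N + 1) ω) ∈ T ∧
      Z ω ∈ W} := by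
  refine (hY.measure_head_inter_tail_inter_pos hmeas hZ (n := N + 1)
    (B := Fin.cons U fun _ => V) (fun i => ?_) (fun i => ?_) hT hTpos hW hWpos).trans_le
    (measure_mono ?_)
  · induction i using Fin.cases <;> assumption
  · induction i using Fin.cases with
    | zero => exact hUpos
    | succ j => exact hVpos j
  rintro ω ⟨⟨hhead, htail⟩, hZω⟩
  refine ⟨hhead 0, fun k hk => ?_, htail, hZω⟩
  simpa only [Fin.cons_succ, Fin.val_succ] using hhead (Fin.succ ⟨k, hk⟩)

end ProbabilityTheory

theorem stmt_6_general {Ω : Type*} [MeasurableSpace Ω] (P : Measure Ω) [IsProbabilityMeasure P]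
    (d : ℕ) (hd : 0 < d) (η : ℝ) (hη : η ∈ Set.Ioo (0 : ℝ) 1)
    (Y : ℕ → Ω → EuclideanSpace ℝ (Fin d))
    (hYmeas : ∀ k, Measurable (Y k))
    (hYindep : iIndepFun Y P)
    (hYident : ∀ k l : ℕ, IdentDistrib (Y k) (Y l) P P)
    (hYnd : ∀ k, NonDegenerate P (Y k))
    (hYint : Integrable (fun ω => ‖Y 0 ω‖) P)
    (Z : Ω → EuclideanSpace ℝ (Fin d))
    (hZnd : NonDegenerate P Z)
    (hindepZ : IndepFun (fun ω (k : ℕ) => Y k ω) Z P)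
    (A : Set Ω)
    (hA : A = {ω | Summable fun k : ℕ => η * (1 - η) ^ k * ‖Y (k + 1) ω‖})
    (χ : Ω → EuclideanSpace ℝ (Fin d))
    (hχ : ∀ ω ∈ A, HasSum (fun k : ℕ => (η * (1 - η) ^ k) • Y (k + 1) ω) (χ ω)) :
    0 < P {ω | ‖(1 - η) • χ ω + η • Y 0 ω - Z ω‖ > ‖χ ω - Z ω‖} := by
  obtain ⟨hη0, hη1⟩ := hη
  set w : ℕ → ℝ := fun k => η * (1 - η) ^ k
  have hw0 : ∀ k, 0 ≤ w k := fun k => mul_nonneg hη0.le (pow_nonneg (by linarith) k)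
  have hw : HasSum w 1 := hasSum_mul_one_sub_pow hη0 hη1
  have : Nonempty (Fin d) := ⟨⟨0, hd⟩⟩
  obtain ⟨a, r, hr, hball⟩ := (hYnd 0).exists_ball_subset
  have haY : ∀ k, a ∈ rvSupport P (Y k) := fun k =>
    (hYident k 0).rvSupport_eq ▸ hball (mem_ball_self hr)
  obtain ⟨z, hz⟩ := hZnd
  obtain ⟨y, hy, hgap⟩ := exists_mem_ball_norm_sub_lt a z hη0 hr
  obtain ⟨ε, hε, hstep⟩ := exists_pos_forall_dist_lt_norm_sub_lt η hgap
  have hmoment : ∫⁻ ω, ‖Y 0 ω - a‖ₑ ∂P ≠ ∞ :=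
    (((integrable_norm_iff (hYmeas 0).aestronglyMeasurable).1 hYint).sub
      (integrable_const a)).2.ne
  obtain ⟨N, hN⟩ := exists_measure_tsum_enorm_smul_sub_lt_pos (X := fun k => Y (k + 1))
    (fun k => hYident (k + 1) 0) hmoment hw.summable (ENNReal.ofReal_pos.2 (half_pos hε))
  refine (hYindep.measure_initial_tail_pos hYmeas hindepZ measurableSet_ball
    (hball hy _ isOpen_ball (mem_ball_self hε)) measurableSet_ball
    (fun k => haY (k + 1) _ isOpen_ball (mem_ball_self (half_pos hε)))
    (measurableSet_tsum_enorm_smul_sub_lt _ _ _) hN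
    measurableSet_ball (interior_subset hz _ isOpen_ball (mem_ball_self hε))).trans_le
    (measure_mono ?_)
  rintro ω ⟨hY0, hhead, htail, hZ⟩
  have hdev : ∑' k, ‖w k • (Y (k + 1) ω - a)‖ₑ < ENNReal.ofReal ε := by
    simpa only [two_mul, add_halves] using tsum_enorm_smul_sub_lt hw0 hw hhead htail
  have hωA : ω ∈ A := hA ▸ summable_mul_norm_of_tsum_enorm_ne_top hw0 hw.summable hdev.ne_top
  have hχa : dist (χ ω) a < ε := by
    rw [← edist_lt_ofReal, edist_eq_enorm_sub]
    exact (enorm_sub_le_tsum_of_hasSum hw (hχ ω hωA) a).trans_lt hdev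
  exact hstep _ _ _ hχa hY0 hZ

/-- **The test loss strictly increases with strictly positive probability.** Let
`η ∈ (0,1)`, let `Y_k : Ω → ℝ^d`, `k ∈ ℕ₀`, be non-degenerate i.i.d. random variables with
`E[‖Y₀‖] < ∞`, let `Z : Ω → ℝ^d` be a non-degenerate random variable independent of
`(Y_k)_{k∈ℕ₀}`, let `A = {Σ_{k=1}^∞ η(1−η)^{k−1}‖Y_k‖ < ∞}` and let `χ : Ω → ℝ^d` be a
random variable with `χ(ω) = Σ_{k=1}^∞ η(1−η)^{k−1} Y_k(ω)` for all `ω ∈ A`. Then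
`ℙ(‖(1−η)χ + ηY₀ − Z‖ > ‖χ − Z‖) > 0`. -/
theorem stmt_6 {Ω : Type*} [MeasurableSpace Ω] (P : Measure Ω) [IsProbabilityMeasure P]
    (d : ℕ) (hd : 0 < d) (η : ℝ) (hη : η ∈ Set.Ioo (0 : ℝ) 1)
    (Y : ℕ → Ω → EuclideanSpace ℝ (Fin d))
    (hYmeas : ∀ k, Measurable (Y k))
    (hYindep : iIndepFun Y P)
    (hYident : ∀ k l : ℕ, IdentDistrib (Y k) (Y l) P P)
    (hYnd : ∀ k, NonDegenerate P (Y k))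
    (hYint : Integrable (fun ω => ‖Y 0 ω‖) P)
    (Z : Ω → EuclideanSpace ℝ (Fin d)) (hZmeas : Measurable Z)
    (hZnd : NonDegenerate P Z)
    (hindepZ : IndepFun (fun ω (k : ℕ) => Y k ω) Z P)
    (A : Set Ω)
    (hA : A = {ω | Summable fun k : ℕ => η * (1 - η) ^ k * ‖Y (k + 1) ω‖})
    (χ : Ω → EuclideanSpace ℝ (Fin d)) (hχmeas : Measurable χ)
    (hχ : ∀ ω ∈ A, HasSum (fun k : ℕ => (η * (1 - η) ^ k) • Y (k + 1) ω) (χ ω)) :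
    0 < P {ω | ‖(1 - η) • χ ω + η • Y 0 ω - Z ω‖ > ‖χ ω - Z ω‖} :=
  stmt_6_general P d hd η hη Y hYmeas hYindep hYident hYnd hYint Z hZnd hindepZ A hA χ hχ
end

section
/- Let d, N ∈ ℕ, let γ₁, γ₂, …, γ_N ∈ ℝ, let (Ω,𝓕,ℙ) be a probability space, let X_n : Ω → ℝ^d, n ∈ {1,…,N}, be independent random variables, let m ∈ {1,…,N} satisfy γ_m ≠ 0, and assume that X_m is non-degenerate. Then the random variable Σ_{n=1}^N γ_n X_n is non-degenerate. -/
open MeasureTheory ProbabilityTheory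
open scoped Pointwise Topology

/-!
If `X_m` is non-degenerate, so is `γ_m X_m`, since `x ↦ γ_m x` is a homeomorphism. The rest
`Z = Σ_{n ≠ m} γ_n X_n` is independent of `γ_m X_m` and, like every random variable in a
second-countable space, has a point `z` in its support. Independence makes the support of a
sum contain the sum of the supports, so the open set `interior (supp (γ_m X_m)) + z` lies in
the support of `γ_m X_m + Z`.
-/

section Support

variable {Ω E : Type*} [MeasurableSpace Ω] [TopologicalSpace E] {P : Measure Ω} {X : Ω → E}

lemma rvSupport_eq_support_map [MeasurableSpace E] [OpensMeasurableSpace E]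
    (hX : AEMeasurable X P) : rvSupport P X = (P.map X).support := by
  ext x
  simp only [rvSupport, Measure.support_eq_forall_isOpen, Set.mem_ofPred_eq]
  refine forall_congr' fun U =>
    forall_comm.trans (imp_congr_right fun _ => imp_congr_right fun hU => ?_)
  rw [Measure.map_apply_of_aemeasurable hX hU.measurableSet]

lemma rvSupport_nonempty [MeasurableSpace E] [OpensMeasurableSpace E]
    [HereditarilyLindelofSpace E] [NeZero P] (hX : AEMeasurable X P) :
    (rvSupport P X).Nonempty := by
  rw [rvSupport_eq_support_map hX]
  exact Measure.nonempty_support (Measure.map_ne_zero_iff hX |>.mpr (NeZero.ne P))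

lemma mapsTo_rvSupport_comp {F : Type*} [TopologicalSpace F] {f : E → F}
    (hf : Continuous f) : Set.MapsTo f (rvSupport P X) (rvSupport P (f ∘ X)) :=
  fun _ hx U hU hxU => hx (f ⁻¹' U) (hU.preimage hf) hxU

lemma NonDegenerate.comp_homeomorph {F : Type*} [TopologicalSpace F] (hX : NonDegenerate P X)
    (e : E ≃ₜ F) : NonDegenerate P (e ∘ X) := by
  obtain ⟨x, hx⟩ := hX
  refine ⟨e x, interior_mono (mapsTo_rvSupport_comp e.continuous).image_subset ?_⟩
  rw [← e.image_interior]
  exact Set.mem_image_of_mem e hx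

lemma rvSupport_add_subset [Add E] [ContinuousAdd E] [MeasurableSpace E]
    [OpensMeasurableSpace E] {Y : Ω → E} (hXY : IndepFun X Y P) :
    rvSupport P X + rvSupport P Y ⊆ rvSupport P (X + Y) := by
  rintro _ ⟨x, hx, y, hy, rfl⟩ U hU hxyU
  have hU' : (fun p : E × E => p.1 + p.2) ⁻¹' U ∈ 𝓝 (x, y) :=
    continuous_add.continuousAt.preimage_mem_nhds (hU.mem_nhds hxyU)
  obtain ⟨u, v, hu, hxu, hv, hyv, huv⟩ := mem_nhds_prod_iff'.mp hU'
  calc 0 < P (X ⁻¹' u) * P (Y ⁻¹' v) := ENNReal.mul_pos (hx u hu hxu).ne' (hy v hv hyv).ne'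
    _ = P (X ⁻¹' u ∩ Y ⁻¹' v) :=
      (hXY.measure_inter_preimage_eq_mul u v hu.measurableSet hv.measurableSet).symm
    _ ≤ P ((X + Y) ⁻¹' U) := measure_mono fun ω hω => huv (Set.mk_mem_prod hω.1 hω.2)

lemma NonDegenerate.add_of_indepFun [AddGroup E] [IsTopologicalAddGroup E] [MeasurableSpace E]
    [OpensMeasurableSpace E] {Y : Ω → E} (hX : NonDegenerate P X)
    (hY : (rvSupport P Y).Nonempty) (hXY : IndepFun X Y P) : NonDegenerate P (X + Y) := by
  obtain ⟨x, hx⟩ := hX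
  obtain ⟨y, hy⟩ := hY
  have hsub : interior (rvSupport P X) + rvSupport P Y ⊆ rvSupport P (X + Y) :=
    (Set.add_subset_add_right interior_subset).trans (rvSupport_add_subset hXY)
  exact ⟨x + y, interior_maximal hsub isOpen_interior.add_right (Set.add_mem_add hx hy)⟩

end Support

theorem stmt_9_general {Ω : Type*} [MeasurableSpace Ω] (P : Measure Ω) [IsProbabilityMeasure P]
    (d N : ℕ) (γ : Fin N → ℝ)
    (X : Fin N → Ω → EuclideanSpace ℝ (Fin d))
    (hmeas : ∀ n, Measurable (X n))
    (hindep : iIndepFun X P)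
    (m : Fin N) (hγm : γ m ≠ 0) (hXm : NonDegenerate P (X m)) :
    NonDegenerate P (fun ω => ∑ n : Fin N, γ n • X n ω) := by
  set Y : Fin N → Ω → EuclideanSpace ℝ (Fin d) := fun n ω => γ n • X n ω
  have hY_meas : ∀ n, Measurable (Y n) := fun n => (hmeas n).const_smul (γ n)
  have hY_indep : iIndepFun Y P :=
    hindep.comp (fun n x => γ n • x) (fun n => measurable_const_smul (γ n))
  have hsplit : (fun ω => ∑ n, Y n ω) = Y m + ∑ n ∈ Finset.univ.erase m, Y n := by
    ext1 ω
    simp only [Pi.add_apply, Finset.sum_apply]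
    exact (Finset.add_sum_erase _ _ (Finset.mem_univ m)).symm
  rw [hsplit]
  refine NonDegenerate.add_of_indepFun ?_ ?_
    (hY_indep.indepFun_finsetSum_of_notMem hY_meas (Finset.notMem_erase m _)).symm
  · exact hXm.comp_homeomorph (Homeomorph.smulOfNeZero (γ m) hγm)
  · exact rvSupport_nonempty (by fun_prop)

/-- **Linear combinations of non-degenerate random variables.** Let `X₁, …, X_N : Ω → ℝ^d`
be independent random variables on a probability space, let `γ₁, …, γ_N ∈ ℝ`, let
`m ∈ {1,…,N}` satisfy `γ_m ≠ 0`, and assume `X_m` is non-degenerate. Then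
`Σ_{n=1}^N γ_n X_n` is non-degenerate. -/
theorem stmt_9 {Ω : Type*} [MeasurableSpace Ω] (P : Measure Ω) [IsProbabilityMeasure P]
    (d N : ℕ) (hd : 0 < d) (hN : 0 < N) (γ : Fin N → ℝ)
    (X : Fin N → Ω → EuclideanSpace ℝ (Fin d))
    (hmeas : ∀ n, Measurable (X n))
    (hindep : iIndepFun X P)
    (m : Fin N) (hγm : γ m ≠ 0) (hXm : NonDegenerate P (X m)) :
    NonDegenerate P (fun ω => ∑ n : Fin N, γ n • X n ω) :=
  stmt_9_general P d N γ X hmeas hindep m hγm hXm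
end

section
/- Let d ∈ ℕ, 𝔠 ∈ (0,∞), let 𝔩(θ,ϑ) = (𝔠/2)‖θ − ϑ‖² for θ,ϑ ∈ ℝ^d, let (Ω,𝓕,ℙ) be a probability space, let X_{n,m} : Ω → ℝ^d, n, m ∈ ℤ, be i.i.d. random variables with sup_{n,m∈ℤ} ‖X_{n,m}(ω)‖ < ∞ for every ω ∈ Ω, let M ∈ ℕ, γ ∈ (0, 2/𝔠), let Θ : ℕ₀ × Ω → ℝ^d satisfy Θ_n = Θ_{n−1} − (γ/M) Σ_{m=1}^M (∇_θ 𝔩)(Θ_{n−1}, X_{n,m}) for all n ∈ ℕ, and let κ ∈ ℤ satisfy Θ₀ = Σ_{n=0}^∞ (𝔠γ(1−𝔠γ)^n/M) Σ_{m=κ+1}^{κ+M} X_{−n,m}. Then sup_{n∈ℕ₀} ‖Θ_n‖ ≤ (2/(2−𝔠γ)) sup_{v,w∈ℤ} ‖X_{v,w}‖. -/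
open MeasureTheory ProbabilityTheory Finset

/-!
With `a = 𝔠γ ∈ (0, 2)`, one SGD step is the relaxation `Θₙ₊₁ = (1 - a) Θₙ + a Yₙ` towards the
mini-batch mean `Yₙ`, whose norm is at most `S = sup ‖X‖`. The bound `B = 2S / (2 - a)` is
chosen so that `|1 - a| B + a S ≤ B`. This single inequality makes the ball of radius `B`
invariant under the step, and also bounds the stationary start `Θ₀ = ∑ a (1 - a)ⁿ Y₋ₙ` by
`a S / (1 - |1 - a|) ≤ B`.
-/

section Relaxation

variable {E : Type*} [SeminormedAddCommGroup E] [NormedSpace ℝ E]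

lemma norm_inv_card_smul_sum_le {ι : Type*} {s : Finset ι} {v : ι → E} {S : ℝ} (hS : 0 ≤ S)
    (hv : ∀ i ∈ s, ‖v i‖ ≤ S) : ‖(#s : ℝ)⁻¹ • ∑ i ∈ s, v i‖ ≤ S := by
  rcases s.eq_empty_or_nonempty with rfl | hs
  · simpa using hS
  have hcard : (0 : ℝ) < #s := by exact_mod_cast hs.card_pos
  calc ‖(#s : ℝ)⁻¹ • ∑ i ∈ s, v i‖ ≤ (#s : ℝ)⁻¹ * ∑ _i ∈ s, S := by
        rw [norm_smul, norm_inv, RCLike.norm_natCast]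
        gcongr
        exact norm_sum_le_of_le s hv
    _ = S := by rw [sum_const, nsmul_eq_mul, inv_mul_cancel_left₀ hcard.ne']

lemma sub_smul_sum_smul_sub_eq_relaxation {M : ℕ} (hM : 0 < M) (c γ : ℝ) (θ : E) (x : ℕ → E) :
    θ - (γ / M) • ∑ m ∈ range M, c • (θ - x m) =
      (1 - c * γ) • θ + (c * γ) • ((M : ℝ)⁻¹ • ∑ m ∈ range M, x m) := by
  have hM' : (M : ℝ) ≠ 0 := by positivity
  rw [← smul_sum, sum_sub_distrib, sum_const, card_range, ← Nat.cast_smul_eq_nsmul ℝ]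
  match_scalars <;> field_simp

lemma abs_one_sub_mul_add_mul_le {a S : ℝ} (ha0 : 0 ≤ a) (ha2 : a < 2) (hS : 0 ≤ S) :
    |1 - a| * (2 / (2 - a) * S) + a * S ≤ 2 / (2 - a) * S := by
  have h2a : 0 < 2 - a := by linarith
  have hSB : S ≤ 2 / (2 - a) * S := le_mul_of_one_le_left hS (by rw [le_div_iff₀ h2a]; linarith)
  rcases le_total a 1 with ha1 | ha1
  · rw [abs_of_nonneg (by linarith)]
    nlinarith
  · have hB : (2 - a) * (2 / (2 - a) * S) = 2 * S := by field_simp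
    rw [abs_of_nonpos (by linarith)]
    nlinarith

lemma norm_relaxation_le {a B S : ℝ} {x y : E} (ha : 0 ≤ a) (hx : ‖x‖ ≤ B) (hy : ‖y‖ ≤ S) :
    ‖(1 - a) • x + a • y‖ ≤ |1 - a| * B + a * S := by
  calc ‖(1 - a) • x + a • y‖ ≤ |1 - a| * ‖x‖ + a * ‖y‖ := by
        refine (norm_add_le _ _).trans_eq ?_
        rw [norm_smul, norm_smul, Real.norm_eq_abs, Real.norm_of_nonneg ha]
    _ ≤ |1 - a| * B + a * S := by gcongr

lemma norm_le_of_relaxation {a B S : ℝ} {θ y : ℕ → E} (ha : 0 ≤ a) (hy : ∀ n, ‖y n‖ ≤ S)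
    (hB : |1 - a| * B + a * S ≤ B) (hrec : ∀ n, θ (n + 1) = (1 - a) • θ n + a • y n)
    (h0 : ‖θ 0‖ ≤ B) (n : ℕ) : ‖θ n‖ ≤ B := by
  induction n with
  | zero => exact h0
  | succ n ih => exact hrec n ▸ (norm_relaxation_le ha ih (hy n)).trans hB

lemma norm_le_of_hasSum_geometric_smul {a B S : ℝ} {x : E} {y : ℕ → E} (ha : 0 ≤ a)
    (ha1 : |1 - a| < 1) (hy : ∀ n, ‖y n‖ ≤ S) (hB : |1 - a| * B + a * S ≤ B)
    (hx : HasSum (fun n => (a * (1 - a) ^ n) • y n) x) : ‖x‖ ≤ B := by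
  have hterm : ∀ n, ‖(a * (1 - a) ^ n) • y n‖ ≤ a * S * |1 - a| ^ n := fun n => by
    rw [norm_smul, norm_mul, norm_pow, Real.norm_of_nonneg ha, Real.norm_eq_abs,
      mul_right_comm, mul_assoc, mul_assoc]
    gcongr
    exact hy n
  have hsum := norm_sub_le_of_geometric_bound_of_hasSum ha1 hterm hx 0
  rw [sum_range_zero, zero_sub, norm_neg, pow_zero, mul_one] at hsum
  refine hsum.trans ?_
  rw [div_le_iff₀ (sub_pos.2 ha1)]
  linarith

end Relaxation

theorem stmt_19_general {Ω : Type*}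
    (d : ℕ) (c : ℝ) (hc : 0 < c)
    (X : ℤ × ℤ → Ω → EuclideanSpace ℝ (Fin d))
    (hbdd : ∀ ω, ∃ C : ℝ, ∀ p : ℤ × ℤ, ‖X p ω‖ ≤ C)
    (M : ℕ) (hM : 0 < M) (γ : ℝ) (hγ : γ ∈ Set.Ioo (0 : ℝ) (2 / c))
    (Θ : ℕ → Ω → EuclideanSpace ℝ (Fin d))
    (hrec : ∀ (n : ℕ) ω, Θ (n + 1) ω = Θ n ω -
      (γ / (M : ℝ)) • ∑ m ∈ Finset.range M, c • (Θ n ω - X ((n : ℤ) + 1, (m : ℤ) + 1) ω))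
    (κ : ℤ)
    (hΘ0 : ∀ ω, HasSum
      (fun n : ℕ => ((c * γ * (1 - c * γ) ^ n) / (M : ℝ)) •
        ∑ m ∈ Finset.range M, X (-(n : ℤ), κ + (m : ℤ) + 1) ω)
      (Θ 0 ω)) :
    ∀ (n : ℕ) ω, ‖Θ n ω‖ ≤
      (2 / (2 - c * γ)) * sSup {r : ℝ | ∃ v w : ℤ, r = ‖X (v, w) ω‖} := by
  intro n ω
  obtain ⟨C, hC⟩ := hbdd ω
  set S := sSup {r : ℝ | ∃ v w : ℤ, r = ‖X (v, w) ω‖}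
  have hXS : ∀ p, ‖X p ω‖ ≤ S := fun p =>
    le_csSup ⟨C, by rintro r ⟨v, w, rfl⟩; exact hC (v, w)⟩ ⟨p.1, p.2, rfl⟩
  have hS : 0 ≤ S := (norm_nonneg _).trans (hXS 0)
  have hmean : ∀ f : ℕ → ℤ × ℤ, ‖(M : ℝ)⁻¹ • ∑ m ∈ range M, X (f m) ω‖ ≤ S := fun f => by
    have := norm_inv_card_smul_sum_le hS (s := range M) fun m _ => hXS (f m)
    rwa [card_range] at this
  have ha0 : 0 < c * γ := mul_pos hc hγ.1
  have ha2 : c * γ < 2 := by have := hγ.2; rw [lt_div_iff₀ hc] at this; linarith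
  have hkey := abs_one_sub_mul_add_mul_le ha0.le ha2 hS
  refine norm_le_of_relaxation (θ := fun k => Θ k ω)
    (y := fun k => (M : ℝ)⁻¹ • ∑ m ∈ range M, X ((k : ℤ) + 1, (m : ℤ) + 1) ω)
    ha0.le (fun k => hmean _) hkey
    (fun k => (hrec k ω).trans (sub_smul_sum_smul_sub_eq_relaxation hM c γ _ _)) ?_ n
  refine norm_le_of_hasSum_geometric_smul
    (y := fun k => (M : ℝ)⁻¹ • ∑ m ∈ range M, X (-(k : ℤ), κ + (m : ℤ) + 1) ω)
    ha0.le (abs_sub_lt_iff.2 ⟨by linarith, by linarith⟩)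
    (fun k => hmean _) hkey ((hΘ0 ω).congr_fun fun k => ?_)
  rw [smul_smul, div_eq_mul_inv]

/-- **A priori bounds for stationary SGD processes.** Let `𝔩(θ,ϑ) = (𝔠/2)‖θ−ϑ‖²`, let
`X_{n,m} : Ω → ℝ^d`, `n, m ∈ ℤ`, be i.i.d. random variables on a probability space with
`sup_{n,m∈ℤ}‖X_{n,m}(ω)‖ < ∞` for every `ω`, let `M ∈ ℕ`, `γ ∈ (0, 2/𝔠)`, let
`Θ : ℕ₀ × Ω → ℝ^d` satisfy the SGD recursion
`Θ_n = Θ_{n−1} − (γ/M) Σ_{m=1}^M (∇_θ 𝔩)(Θ_{n−1}, X_{n,m})` (with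
`(∇_θ 𝔩)(θ,x) = 𝔠(θ−x)`), and let `κ ∈ ℤ` satisfy
`Θ₀ = Σ_{n=0}^∞ (𝔠γ(1−𝔠γ)^n/M) Σ_{m=κ+1}^{κ+M} X_{−n,m}`. Then
`sup_{n∈ℕ₀} ‖Θ_n‖ ≤ (2/(2−𝔠γ)) sup_{v,w∈ℤ} ‖X_{v,w}‖`. -/
theorem stmt_19 {Ω : Type*} [MeasurableSpace Ω] (P : Measure Ω) [IsProbabilityMeasure P]
    (d : ℕ) (hd : 0 < d) (c : ℝ) (hc : 0 < c)
    (X : ℤ × ℤ → Ω → EuclideanSpace ℝ (Fin d))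
    (hmeas : ∀ p, Measurable (X p))
    (hindep : iIndepFun X P)
    (hident : ∀ p q : ℤ × ℤ, IdentDistrib (X p) (X q) P P)
    (hbdd : ∀ ω, ∃ C : ℝ, ∀ p : ℤ × ℤ, ‖X p ω‖ ≤ C)
    (M : ℕ) (hM : 0 < M) (γ : ℝ) (hγ : γ ∈ Set.Ioo (0 : ℝ) (2 / c))
    (Θ : ℕ → Ω → EuclideanSpace ℝ (Fin d))
    (hrec : ∀ (n : ℕ) ω, Θ (n + 1) ω = Θ n ω -
      (γ / (M : ℝ)) • ∑ m ∈ Finset.range M, c • (Θ n ω - X ((n : ℤ) + 1, (m : ℤ) + 1) ω))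
    (κ : ℤ)
    (hΘ0 : ∀ ω, HasSum
      (fun n : ℕ => ((c * γ * (1 - c * γ) ^ n) / (M : ℝ)) •
        ∑ m ∈ Finset.range M, X (-(n : ℤ), κ + (m : ℤ) + 1) ω)
      (Θ 0 ω)) :
    ∀ (n : ℕ) ω, ‖Θ n ω‖ ≤
      (2 / (2 - c * γ)) * sSup {r : ℝ | ∃ v w : ℤ, r = ‖X (v, w) ω‖} :=
  stmt_19_general d c hc X hbdd M hM γ hγ Θ hrec κ hΘ0
end
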